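/- Fix k ∈ I_uf and set F = {k}. Let Θ ⊆ ℤ^I satisfy Θ + f_k ⊆ Θ, and let S = {s_g : g∈Θ} be a Θ-pointed family satisfying the factorization property with respect to k: x_k · frz_{F,g}(s_g) = frz_{F,g+f_k}(s_{g+f_k}) for all g ∈ Θ. Then for every g ∈ Θ and every d ∈ ℕ such that k ∉ supp s_{g+d·f_k}, one has s_{g+d·f_k} = x_k^d · frz_{F,g}(s_g). -/

import Mathlib

noncomputable section

namespace CAFreeze

variable {I : Type*} [Fintype I] [DecidableEq I]

/-- The Laurent polynomial ring LP = ℤ[x_i^{±1} : i ∈ I], modeled as the group algebra of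
ℤ^I over ℤ. -/
abbrev LP (I : Type*) := AddMonoidAlgebra ℤ (I → ℤ)

/-- The monomial x^m for an exponent vector m ∈ ℤ^I. -/
def mono (m : I → ℤ) : LP I := AddMonoidAlgebra.single m 1

/-- The coefficient of the monomial x^m in z ∈ LP. -/
def coeff (z : LP I) (m : I → ℤ) : ℤ := z.coeff m

variable (Iuf : Finset I) (Bt : I → {i // i ∈ Iuf} → ℤ)

/-- The linear map p* : ℤ^{I_uf} → ℤ^I, p*(n) = B̃·n. -/
def pstar (n : {i // i ∈ Iuf} → ℤ) : I → ℤ := fun i => ∑ kk : {i // i ∈ Iuf}, Bt i kk * n kk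

/-- p*(n) for n ∈ ℕ^{I_uf}. -/
def pstarN (n : {i // i ∈ Iuf} → ℕ) : I → ℤ := pstar Iuf Bt fun kk => (n kk : ℤ)

/-- supp n = {k ∈ I_uf : n_k ≠ 0}, as a subset of I. -/
def suppn (n : {i // i ∈ Iuf} → ℕ) : Set I := {i | ∃ h : i ∈ Iuf, n ⟨i, h⟩ ≠ 0}

/-- LP_{⪯m}: the ℤ-submodule of LP spanned by the monomials x^{m+p*(n)}, n ∈ ℕ^{I_uf}. -/
def LPle (m : I → ℤ) : Submodule ℤ (LP I) :=
  Submodule.span ℤ {z : LP I | ∃ n : {i // i ∈ Iuf} → ℕ, z = mono (m + pstarN Iuf Bt n)}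

open Classical in
/-- The freezing operator frz_{F,m}: it keeps the monomials x^{m+p*(n)} with
supp n ∩ F = ∅ and kills the monomials x^{m+p*(n)} with supp n ∩ F ≠ ∅. -/
def frz (F : Finset I) (m : I → ℤ) (z : LP I) : LP I :=
  AddMonoidAlgebra.ofCoeff (Finsupp.filter
    (fun e => ∃ n : {i // i ∈ Iuf} → ℕ, e = m + pstarN Iuf Bt n ∧ suppn Iuf n ∩ (F : Set I) = ∅) z.coeff)

/-- z ∈ LP is pointed at g: z = Σ_{n ∈ ℕ^{I_uf}} c_n x^{g+p*(n)} with c_0 = 1. -/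
def Pointed (g : I → ℤ) (z : LP I) : Prop :=
  coeff z g = 1 ∧
    ∀ e ∈ z.coeff.support, ∃ n : {i // i ∈ Iuf} → ℕ, e = g + pstarN Iuf Bt n

/-- supp z = ∪_{c_n ≠ 0} supp n, for a g-pointed z = Σ_n c_n x^{g+p*(n)}. -/
def suppz (g : I → ℤ) (z : LP I) : Set I :=
  ⋃ n ∈ {n : {i // i ∈ Iuf} → ℕ | coeff z (g + pstarN Iuf Bt n) ≠ 0}, suppn Iuf n

/-- suppDim z ∈ ℕ^{I_uf}: the coordinatewise maximum of {n : c_n ≠ 0}, for a g-pointed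
z = Σ_n c_n x^{g+p*(n)}. -/
def suppDim (g : I → ℤ) (z : LP I) : {i // i ∈ Iuf} → ℕ :=
  fun kk => sSup {d : ℕ | ∃ n : {i // i ∈ Iuf} → ℕ, coeff z (g + pstarN Iuf Bt n) ≠ 0 ∧ n kk = d}

omit [Fintype I] [DecidableEq I] in
theorem frz_eq_self_of_disjoint_suppz {g : I → ℤ} {F : Finset I} {z : LP I}
    (hz : Pointed Iuf Bt g z) (hF : Disjoint (F : Set I) (suppz Iuf Bt g z)) :
    frz Iuf Bt F g z = z := by
  classical
  ext e
  rw [frz, AddMonoidAlgebra.coeff_ofCoeff, Finsupp.filter_apply, ite_eq_left_iff, eq_comm]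
  intro hkilled
  by_contra hne
  obtain ⟨n, rfl⟩ := hz.2 e (Finsupp.mem_support_iff.mpr hne)
  have hn : suppn Iuf n ⊆ suppz Iuf Bt g z := Set.subset_biUnion_of_mem (u := suppn Iuf) hne
  exact hkilled ⟨n, rfl, Set.disjoint_iff_inter_eq_empty.mp (hF.symm.mono_left hn)⟩

theorem add_nsmul_mem_of_add_mem {M : Type*} [AddMonoid M] {S : Set M} {f : M}
    (hS : ∀ g ∈ S, g + f ∈ S) {g : M} (hg : g ∈ S) (d : ℕ) : g + d • f ∈ S := by
  induction d with
  | zero => simpa using hg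
  | succ d ih => simpa only [succ_nsmul, ← add_assoc] using hS _ ih

omit [Fintype I] [DecidableEq I] in
theorem frz_add_nsmul_eq_pow_mul (F : Finset I) (f : I → ℤ) (Θ : Set (I → ℤ))
    (hΘ : ∀ g ∈ Θ, g + f ∈ Θ) (s : (I → ℤ) → LP I)
    (hfact : ∀ g ∈ Θ, mono f * frz Iuf Bt F g (s g) = frz Iuf Bt F (g + f) (s (g + f)))
    {g : I → ℤ} (hg : g ∈ Θ) (d : ℕ) :
    frz Iuf Bt F (g + d • f) (s (g + d • f)) = mono f ^ d * frz Iuf Bt F g (s g) := by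
  induction d with
  | zero => simp
  | succ d ih =>
    rw [succ_nsmul, ← add_assoc, ← hfact _ (add_nsmul_mem_of_add_mem hΘ hg d), ih, pow_succ',
      mul_assoc]

theorem shift_product_factorization
    (k : I)
    (Θ : Set (I → ℤ)) (hΘ : ∀ g ∈ Θ, g + Pi.single k (1 : ℤ) ∈ Θ)
    (s : (I → ℤ) → LP I) (hs : ∀ g ∈ Θ, Pointed Iuf Bt g (s g))
    -- the factorization property with respect to k, for F = {k}
    (hfact : ∀ g ∈ Θ, mono (Pi.single k (1 : ℤ)) * frz Iuf Bt {k} g (s g) =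
      frz Iuf Bt {k} (g + Pi.single k (1 : ℤ)) (s (g + Pi.single k (1 : ℤ)))) :
    ∀ g ∈ Θ, ∀ d : ℕ,
      k ∉ suppz Iuf Bt (g + d • Pi.single k (1 : ℤ)) (s (g + d • Pi.single k (1 : ℤ))) →
      s (g + d • Pi.single k (1 : ℤ)) =
        mono (Pi.single k (1 : ℤ)) ^ d * frz Iuf Bt {k} g (s g) := by
  intro g hg d hd
  have hfrozen := frz_eq_self_of_disjoint_suppz Iuf Bt (F := {k})
    (hs _ (add_nsmul_mem_of_add_mem hΘ hg d)) (by simpa using hd)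
  rw [← hfrozen, frz_add_nsmul_eq_pow_mul Iuf Bt {k} _ Θ hΘ s hfact hg d]

end CAFreeze
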